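/- Let n ≥ 5 be a natural number and ρ ∈ [0,1]. Then the Bernoulli product measure ν_ρ^n is invariant for the DEP generator on the torus ℤ/nℤ: for every function f : {0,1}^{ℤ/nℤ} → ℝ, ∑_{η ∈ {0,1}^{ℤ/nℤ}} ν_ρ^n(η) · (L_n f)(η) = 0. -/

import Mathlib

/-- The configuration obtained from `η` by exchanging the values at sites `x` and `y`. -/
def torusSwap {n : ℕ} (η : ZMod n → Fin 2) (x y : ZMod n) : ZMod n → Fin 2 :=
  fun z => if z = x then η y else if z = y then η x else η z

/-- The DEP generator on the torus `ℤ/nℤ`. -/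
def torusGen {n : ℕ} [NeZero n] (f : (ZMod n → Fin 2) → ℝ) (η : ZMod n → Fin 2) : ℝ :=
  ∑ x : ZMod n,
    ((f (torusSwap η x (x + 1)) - f η) +
      if η x = η (x + 1) then f (torusSwap η x (x + 2)) - f η else 0)

/-- The Bernoulli product weight `ν_ρ^n(η) = ∏_x ρ^{η(x)} (1-ρ)^{1-η(x)}`. -/
def bernoulliWeight {n : ℕ} [NeZero n] (ρ : ℝ) (η : ZMod n → Fin 2) : ℝ :=
  ∏ x : ZMod n, ρ ^ (η x : ℕ) * (1 - ρ) ^ (1 - (η x : ℕ))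

/-!
`ν_ρ^n` is exchangeable, so for every swap `T` of two sites and every `g`,
`∑ ν g (f ∘ T - f) = ∑ ν (g ∘ T - g) f`. For a nearest-neighbour swap `g = 1` and the term
vanishes. For the swap of `x` and `x + 2`, `g` is the constraint `η x = η (x + 1)`, which `T`
turns into the constraint `η (x + 1) = η (x + 2)` of the next bond; summed over the torus the
two constraints cancel.
-/

lemma Function.Involutive.sum_mul_mul_sub_comp {α R : Type*} [Fintype α] [CommRing R]
    {T : α → α} (hT : Function.Involutive T) {w : α → R} (hw : ∀ a, w (T a) = w a)
    (g f : α → R) :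
    ∑ a, w a * g a * (f (T a) - f a) = ∑ a, w a * (g (T a) - g a) * f a := by
  have hswap : ∑ a, w a * g a * f (T a) = ∑ a, w a * g (T a) * f a := by
    rw [← Equiv.sum_comp hT.toPerm]
    simp only [Function.Involutive.coe_toPerm, hw, hT _]
  simp only [mul_sub, sub_mul, Finset.sum_sub_distrib, hswap]

lemma torusSwap_eq_comp {n : ℕ} (η : ZMod n → Fin 2) (x y : ZMod n) :
    torusSwap η x y = η ∘ Equiv.swap x y := by
  funext z
  simp only [torusSwap, Function.comp_apply, Equiv.swap_apply_def]
  split_ifs <;> rfl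

lemma torusSwap_involutive {n : ℕ} (x y : ZMod n) :
    Function.Involutive (torusSwap · x y) := by
  intro η
  funext z
  simp only [torusSwap_eq_comp, Function.comp_apply, Equiv.swap_apply_self]

lemma bernoulliWeight_torusSwap {n : ℕ} [NeZero n] (ρ : ℝ) (η : ZMod n → Fin 2) (x y : ZMod n) :
    bernoulliWeight ρ (torusSwap η x y) = bernoulliWeight ρ η := by
  simp only [bernoulliWeight, torusSwap_eq_comp, Function.comp_apply]
  exact Equiv.prod_comp (Equiv.swap x y) (fun z => ρ ^ (η z : ℕ) * (1 - ρ) ^ (1 - (η z : ℕ)))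

def bondAgree {n : ℕ} (η : ZMod n → Fin 2) (x : ZMod n) : ℝ :=
  if η x = η (x + 1) then 1 else 0

lemma torusGen_eq_sum_bondAgree {n : ℕ} [NeZero n] (f : (ZMod n → Fin 2) → ℝ)
    (η : ZMod n → Fin 2) :
    torusGen f η = ∑ x : ZMod n, ((f (torusSwap η x (x + 1)) - f η) +
      bondAgree η x * (f (torusSwap η x (x + 2)) - f η)) := by
  simp only [torusGen, bondAgree, boole_mul]

lemma bondAgree_torusSwap_add_two {n : ℕ} [Nontrivial (ZMod n)] (η : ZMod n → Fin 2)
    (x : ZMod n) : bondAgree (torusSwap η x (x + 2)) x = bondAgree η (x + 1) := by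
  have h1 : x + 1 ≠ x := by simp
  have h12 : x + 1 ≠ x + 2 := fun h => one_ne_zero (by linear_combination -h)
  have hx : torusSwap η x (x + 2) x = η (x + 2) := if_pos rfl
  have hx1 : torusSwap η x (x + 2) (x + 1) = η (x + 1) := by
    simp only [torusSwap, if_neg h1, if_neg h12]
  simp only [bondAgree, hx, hx1, add_assoc, one_add_one_eq_two, eq_comm]

lemma sum_bondAgree_add_one {n : ℕ} [NeZero n] (η : ZMod n → Fin 2) :
    ∑ x : ZMod n, bondAgree η (x + 1) = ∑ x : ZMod n, bondAgree η x :=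
  Equiv.sum_comp (Equiv.addRight 1) (bondAgree η)

theorem dep_bernoulli_invariant_general (n : ℕ) [NeZero n] (hn : 5 ≤ n)
    (ρ : ℝ)
    (f : (ZMod n → Fin 2) → ℝ) :
    ∑ η : ZMod n → Fin 2, bernoulliWeight ρ η * torusGen f η = 0 := by
  have : Fact (1 < n) := ⟨by omega⟩
  have exchange (x y : ZMod n) :=
    (torusSwap_involutive x y).sum_mul_mul_sub_comp (bernoulliWeight_torusSwap ρ · x y)
  calc ∑ η, bernoulliWeight ρ η * torusGen f η
      = ∑ x, (∑ η, bernoulliWeight ρ η * 1 * (f (torusSwap η x (x + 1)) - f η) +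
          ∑ η, bernoulliWeight ρ η * bondAgree η x * (f (torusSwap η x (x + 2)) - f η)) := by
        simp only [torusGen_eq_sum_bondAgree, Finset.mul_sum, mul_add, mul_one, mul_assoc,
          Finset.sum_add_distrib]
        rw [Finset.sum_comm]
        exact congrArg _ Finset.sum_comm
    _ = ∑ η, bernoulliWeight ρ η *
          (∑ x, bondAgree η (x + 1) - ∑ x, bondAgree η x) * f η := by
        simp only [exchange, bondAgree_torusSwap_add_two, sub_self, mul_zero, zero_mul,
          Finset.sum_const_zero, zero_add]
        rw [Finset.sum_comm]
        simp only [← Finset.sum_sub_distrib, Finset.mul_sum, Finset.sum_mul]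
    _ = 0 := by
        simp only [sum_bondAgree_add_one, sub_self, mul_zero, zero_mul, Finset.sum_const_zero]

/-- The Bernoulli product measure `ν_ρ^n` is invariant for DEP on the torus `ℤ/nℤ`, `n ≥ 5`. -/
theorem dep_bernoulli_invariant (n : ℕ) [NeZero n] (hn : 5 ≤ n)
    (ρ : ℝ) (hρ0 : 0 ≤ ρ) (hρ1 : ρ ≤ 1)
    (f : (ZMod n → Fin 2) → ℝ) :
    ∑ η : ZMod n → Fin 2, bernoulliWeight ρ η * torusGen f η = 0 :=
  dep_bernoulli_invariant_general n hn ρ f
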